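/- arXiv:0903.5060 — 10 statements merged into one kernel-verified Lean document; each statement's English description precedes it below -/
import Mathlib

section
/- Let H and G be groups and let α : G × H → H (written α(g,h) = g ▷ h) and β : G × H → G (written β(g,h) = g ◁ h) be arbitrary maps. Then the multiplication (h₁, g₁)·(h₂, g₂) := (h₁(g₁ ▷ h₂), (g₁ ◁ h₂)g₂) on the set H × G is a group structure with unit (1_H, 1_G) if and only if (H, G, α, β) is a matched pair of groups, i.e. α is a left action of the group G on the underlying set of H, β is a right action of the group H on the underlying set of G, and g ▷ (h₁h₂) = (g ▷ h₁)((g ◁ h₁) ▷ h₂) and (g₁g₂) ◁ h = (g₁ ◁ (g₂ ▷ h))(g₂ ◁ h) hold for all h, h₁, h₂ ∈ H and g, g₁, g₂ ∈ G. -/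
/-- A matched pair of groups `(H, G, α, β)` in the sense of Takeuchi:
`act g h = g ▷ h` is a left action of the group `G` on the set `H`,
`coact g h = g ◁ h` is a right action of the group `H` on the set `G`, and the
two compatibility conditions hold. -/
structure IsMatchedPair {H G : Type*} [Group H] [Group G]
    (act : G → H → H) (coact : G → H → G) : Prop where
  one_act : ∀ h, act 1 h = h
  mul_act : ∀ g₁ g₂ h, act (g₁ * g₂) h = act g₁ (act g₂ h)
  coact_one : ∀ g, coact g 1 = g
  coact_mul : ∀ g h₁ h₂, coact g (h₁ * h₂) = coact (coact g h₁) h₂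
  act_mul : ∀ g h₁ h₂, act g (h₁ * h₂) = act g h₁ * act (coact g h₁) h₂
  mul_coact : ∀ g₁ g₂ h, coact (g₁ * g₂) h = coact g₁ (act g₂ h) * coact g₂ h

namespace IsMatchedPair

variable {H G : Type*} [Group H] [Group G] {act : G → H → H} {coact : G → H → G}

theorem act_one (mp : IsMatchedPair act coact) (g : G) : act g 1 = 1 := by
  have h := mp.act_mul g 1 1
  rw [mp.coact_one, one_mul] at h
  exact (left_eq_mul.mp h)

theorem one_coact (mp : IsMatchedPair act coact) (h : H) : coact 1 h = 1 := by
  have e := mp.mul_coact 1 1 h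
  rw [mp.one_act, one_mul] at e
  exact (left_eq_mul.mp e)

end IsMatchedPair

/-- The bicrossed product multiplication on the set `H × G`:
`(h₁, g₁) · (h₂, g₂) = (h₁ (g₁ ▷ h₂), (g₁ ◁ h₂) g₂)`. -/
def bicrossMul {H G : Type*} [Group H] [Group G] (act : G → H → H) (coact : G → H → G)
    (x y : H × G) : H × G :=
  (x.1 * act x.2 y.1, coact x.2 y.1 * y.2)

/-! Associativity on the triples `(1, g₁), (1, g₂), (h, 1)` and `(1, g), (h₁, 1), (h₂, 1)` yields
exactly the action and compatibility axioms, once the unit laws have given `1 ▷ h = h`,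
`1 ◁ h = 1`, `g ▷ 1 = 1` and `g ◁ 1 = g`. Conversely, for a matched pair the axioms make the
product associative, and the inverse of `(h, g) = (h, 1)(1, g)` is
`(1, g⁻¹)(h⁻¹, 1) = (g⁻¹ ▷ h⁻¹, g⁻¹ ◁ h⁻¹)`. -/

section BicrossedProduct

variable {H G : Type*} [Group H] [Group G] {act : G → H → H} {coact : G → H → G}

section FromGroupLaws

theorem one_act_of_one_bicrossMul (lu : ∀ x : H × G, bicrossMul act coact (1, 1) x = x)
    (h : H) : act 1 h = h := by
  simpa [bicrossMul] using congrArg Prod.fst (lu (h, 1))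

theorem one_coact_of_one_bicrossMul (lu : ∀ x : H × G, bicrossMul act coact (1, 1) x = x)
    (h : H) : coact 1 h = 1 := by
  simpa [bicrossMul] using congrArg Prod.snd (lu (h, 1))

theorem act_one_of_bicrossMul_one (ru : ∀ x : H × G, bicrossMul act coact x (1, 1) = x)
    (g : G) : act g 1 = 1 := by
  simpa [bicrossMul] using congrArg Prod.fst (ru (1, g))

theorem coact_one_of_bicrossMul_one (ru : ∀ x : H × G, bicrossMul act coact x (1, 1) = x)
    (g : G) : coact g 1 = g := by
  simpa [bicrossMul] using congrArg Prod.snd (ru (1, g))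

variable (assoc : ∀ x y z : H × G,
  bicrossMul act coact (bicrossMul act coact x y) z =
    bicrossMul act coact x (bicrossMul act coact y z))
include assoc

theorem mul_act_and_mul_coact_of_bicrossMul_assoc
    (ru : ∀ x : H × G, bicrossMul act coact x (1, 1) = x) (g₁ g₂ : G) (h : H) :
    act (g₁ * g₂) h = act g₁ (act g₂ h) ∧
      coact (g₁ * g₂) h = coact g₁ (act g₂ h) * coact g₂ h := by
  simpa [bicrossMul, Prod.ext_iff, act_one_of_bicrossMul_one ru,
    coact_one_of_bicrossMul_one ru] using assoc (1, g₁) (1, g₂) (h, 1)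

theorem act_mul_and_coact_mul_of_bicrossMul_assoc
    (lu : ∀ x : H × G, bicrossMul act coact (1, 1) x = x) (g : G) (h₁ h₂ : H) :
    act g (h₁ * h₂) = act g h₁ * act (coact g h₁) h₂ ∧
      coact g (h₁ * h₂) = coact (coact g h₁) h₂ := by
  simpa [bicrossMul, Prod.ext_iff, one_act_of_one_bicrossMul lu,
    one_coact_of_one_bicrossMul lu] using (assoc (1, g) (h₁, 1) (h₂, 1)).symm

theorem IsMatchedPair.of_bicrossMul
    (lu : ∀ x : H × G, bicrossMul act coact (1, 1) x = x)
    (ru : ∀ x : H × G, bicrossMul act coact x (1, 1) = x) :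
    IsMatchedPair act coact where
  one_act := one_act_of_one_bicrossMul lu
  mul_act g₁ g₂ h := (mul_act_and_mul_coact_of_bicrossMul_assoc assoc ru g₁ g₂ h).1
  coact_one := coact_one_of_bicrossMul_one ru
  coact_mul g h₁ h₂ := (act_mul_and_coact_mul_of_bicrossMul_assoc assoc lu g h₁ h₂).2
  act_mul g h₁ h₂ := (act_mul_and_coact_mul_of_bicrossMul_assoc assoc lu g h₁ h₂).1
  mul_coact g₁ g₂ h := (mul_act_and_mul_coact_of_bicrossMul_assoc assoc ru g₁ g₂ h).2

end FromGroupLaws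

def bicrossInv (act : G → H → H) (coact : G → H → G) (x : H × G) : H × G :=
  (act x.2⁻¹ x.1⁻¹, coact x.2⁻¹ x.1⁻¹)

namespace IsMatchedPair

variable (mp : IsMatchedPair act coact)
include mp

theorem bicrossMul_assoc (x y z : H × G) :
    bicrossMul act coact (bicrossMul act coact x y) z =
      bicrossMul act coact x (bicrossMul act coact y z) := by
  simp [bicrossMul, mp.mul_act, mp.mul_coact, mp.act_mul, mp.coact_mul, mul_assoc]

theorem one_bicrossMul (x : H × G) : bicrossMul act coact (1, 1) x = x := by
  simp [bicrossMul, mp.one_act, mp.one_coact]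

theorem bicrossMul_one (x : H × G) : bicrossMul act coact x (1, 1) = x := by
  simp [bicrossMul, mp.act_one, mp.coact_one]

theorem bicrossMul_bicrossInv (x : H × G) :
    bicrossMul act coact x (bicrossInv act coact x) = (1, 1) := by
  simp [bicrossMul, bicrossInv, ← mp.mul_act, ← mp.mul_coact, mp.one_act, mp.one_coact]

theorem bicrossInv_bicrossMul (x : H × G) :
    bicrossMul act coact (bicrossInv act coact x) x = (1, 1) := by
  simp [bicrossMul, bicrossInv, ← mp.act_mul, ← mp.coact_mul, mp.act_one, mp.coact_one]

end IsMatchedPair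

end BicrossedProduct

/-- The multiplication `(h₁, g₁)·(h₂, g₂) = (h₁(g₁ ▷ h₂), (g₁ ◁ h₂)g₂)` on the set
`H × G` is a group structure with unit `(1_H, 1_G)` if and only if
`(H, G, act, coact)` is a matched pair of groups. -/
theorem bicrossMul_group_iff_isMatchedPair {H G : Type*} [Group H] [Group G]
    (act : G → H → H) (coact : G → H → G) :
    ((∀ x y z : H × G,
        bicrossMul act coact (bicrossMul act coact x y) z =
          bicrossMul act coact x (bicrossMul act coact y z)) ∧
      (∀ x : H × G, bicrossMul act coact (1, 1) x = x) ∧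
      (∀ x : H × G, bicrossMul act coact x (1, 1) = x) ∧
      (∀ x : H × G, ∃ y : H × G,
        bicrossMul act coact x y = (1, 1) ∧ bicrossMul act coact y x = (1, 1))) ↔
      IsMatchedPair act coact := by
  constructor
  · rintro ⟨assoc, lu, ru, -⟩
    exact .of_bicrossMul assoc lu ru
  · intro mp
    exact ⟨mp.bicrossMul_assoc, mp.one_bicrossMul, mp.bicrossMul_one,
      fun x => ⟨bicrossInv act coact x, mp.bicrossMul_bicrossInv x, mp.bicrossInv_bicrossMul x⟩⟩
end

section
/- Let (H, G, α, β) be a matched pair of groups. The center of the bicrossed product H ⋈ G is Z(H ⋈ G) = {(h, g) ∈ Fix(H) × Fix(G) | g ▷ x = h⁻¹xh for all x ∈ H, and y ◁ h = gyg⁻¹ for all y ∈ G}. -/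
/-- The underlying set `H × G` of the bicrossed product associated to the maps
`act` and `coact`. -/
@[ext]
structure Bicross {H G : Type*} (act : G → H → H) (coact : G → H → G) where
  h : H
  g : G

namespace Bicross

variable {H G : Type*} [Group H] [Group G] {act : G → H → H} {coact : G → H → G}

instance : Mul (Bicross act coact) :=
  ⟨fun x y => ⟨x.h * act x.g y.h, coact x.g y.h * y.g⟩⟩

instance : One (Bicross act coact) := ⟨⟨1, 1⟩⟩

instance : Inv (Bicross act coact) :=
  ⟨fun x => ⟨act x.g⁻¹ x.h⁻¹, coact x.g⁻¹ x.h⁻¹⟩⟩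

@[simp] theorem mul_def (x y : Bicross act coact) :
    x * y = ⟨x.h * act x.g y.h, coact x.g y.h * y.g⟩ := rfl

@[simp] theorem one_def : (1 : Bicross act coact) = ⟨1, 1⟩ := rfl

@[simp] theorem inv_def (x : Bicross act coact) :
    x⁻¹ = ⟨act x.g⁻¹ x.h⁻¹, coact x.g⁻¹ x.h⁻¹⟩ := rfl

/-- The bicrossed product `H ⋈ G` of a matched pair of groups. -/
instance group [hmp : Fact (IsMatchedPair act coact)] : Group (Bicross act coact) :=
  have mp := hmp.out
  Group.ofLeftAxioms
    (by
      rintro ⟨a, p⟩ ⟨b, q⟩ ⟨c, r⟩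
      simp only [mul_def, mk.injEq]
      constructor
      · rw [mp.act_mul, mp.mul_act, mul_assoc]
      · rw [mp.mul_coact, mp.coact_mul, mul_assoc])
    (by
      rintro ⟨a, p⟩
      simp only [mul_def, one_def, mk.injEq]
      rw [mp.one_act, mp.one_coact, one_mul, one_mul]
      exact ⟨rfl, rfl⟩)
    (by
      rintro ⟨a, p⟩
      simp only [mul_def, inv_def, one_def, mk.injEq]
      constructor
      · rw [← mp.act_mul, inv_mul_cancel, mp.act_one]
      · rw [← mp.coact_mul, inv_mul_cancel, mp.coact_one, inv_mul_cancel])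

end Bicross
namespace IsMatchedPair

variable {H G : Type*} [Group H] [Group G] {act : G → H → H} {coact : G → H → G}

/-- `Fix(H) = {h ∈ H | g ▷ h = h for all g ∈ G}` as a subgroup of `H`. -/
def fixH (mp : IsMatchedPair act coact) : Subgroup H where
  carrier := {h : H | ∀ g : G, act g h = h}
  one_mem' := fun g => mp.act_one g
  mul_mem' := by
    intro h₁ h₂ m₁ m₂ g
    rw [mp.act_mul, m₁ g, m₂ (coact g h₁)]
  inv_mem' := by
    intro h m g
    have e := mp.act_mul g h⁻¹ h
    rw [inv_mul_cancel, mp.act_one, m (coact g h⁻¹)] at e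
    exact mul_eq_one_iff_eq_inv.mp e.symm

/-- `Fix(G) = {g ∈ G | g ◁ h = g for all h ∈ H}` as a subgroup of `G`. -/
def fixG (mp : IsMatchedPair act coact) : Subgroup G where
  carrier := {g : G | ∀ h : H, coact g h = g}
  one_mem' := fun h => mp.one_coact h
  mul_mem' := by
    intro g₁ g₂ m₁ m₂ h
    rw [mp.mul_coact, m₁ (act g₂ h), m₂ h]
  inv_mem' := by
    intro g m h
    have surj : act g (act g⁻¹ h) = h := by
      rw [← mp.mul_act, mul_inv_cancel, mp.one_act]
    have e := mp.mul_coact g⁻¹ g (act g⁻¹ h)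
    rw [inv_mul_cancel, mp.one_coact, surj, m (act g⁻¹ h)] at e
    exact mul_eq_one_iff_eq_inv.mp e.symm

@[simp] theorem mem_fixH (mp : IsMatchedPair act coact) (h : H) :
    h ∈ mp.fixH ↔ ∀ g : G, act g h = h := Iff.rfl

@[simp] theorem mem_fixG (mp : IsMatchedPair act coact) (g : G) :
    g ∈ mp.fixG ↔ ∀ h : H, coact g h = g := Iff.rfl

end IsMatchedPair

/- Since `(a, p) = (a, 1) * (1, p)`, an element `(h, g)` is central iff it commutes with every
`(a, 1)` and every `(1, p)`. Comparing coordinates, the first amounts to `g ◁ a = g` and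
`g ▷ a = h⁻¹ a h`, the second to `p ▷ h = h` and `p ◁ h = g p g⁻¹`. -/

namespace Bicross

variable {H G : Type*} [Group H] [Group G] {act : G → H → H} {coact : G → H → G}

theorem mk_eq_mk_one_mul_one_mk (mp : IsMatchedPair act coact) (a : H) (p : G) :
    (⟨a, p⟩ : Bicross act coact) = ⟨a, 1⟩ * ⟨1, p⟩ := by
  simp only [mul_def, mp.one_act, mp.coact_one, mul_one, one_mul]

theorem commute_mk_one_iff (mp : IsMatchedPair act coact) (a : H) (x : Bicross act coact) :
    Commute (⟨a, 1⟩ : Bicross act coact) x ↔ act x.g a = x.h⁻¹ * a * x.h ∧ coact x.g a = x.g := by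
  simp only [Commute, SemiconjBy, mul_def, Bicross.ext_iff, mp.one_act, mp.one_coact, one_mul,
    mul_one, mul_assoc, eq_inv_mul_iff_mul_eq, eq_comm]

theorem commute_one_mk_iff (mp : IsMatchedPair act coact) (p : G) (x : Bicross act coact) :
    Commute (⟨1, p⟩ : Bicross act coact) x ↔ act p x.h = x.h ∧ coact p x.h = x.g * p * x.g⁻¹ := by
  simp only [Commute, SemiconjBy, mul_def, Bicross.ext_iff, mp.act_one, mp.coact_one, one_mul,
    mul_one, eq_mul_inv_iff_mul_eq]

theorem mem_center_iff [hmp : Fact (IsMatchedPair act coact)] (x : Bicross act coact) :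
    x ∈ Subgroup.center (Bicross act coact) ↔
      (∀ a : H, Commute (⟨a, 1⟩ : Bicross act coact) x) ∧
        ∀ p : G, Commute (⟨1, p⟩ : Bicross act coact) x := by
  refine ⟨fun hx => ⟨fun a => Subgroup.mem_center_iff.mp hx _,
    fun p => Subgroup.mem_center_iff.mp hx _⟩, fun ⟨hH, hG⟩ => ?_⟩
  refine Subgroup.mem_center_iff.mpr fun ⟨a, p⟩ => ?_
  rw [mk_eq_mk_one_mul_one_mk hmp.out]
  exact (hH a).mul_left (hG p)

end Bicross

/-- The center of the bicrossed product `H ⋈ G` of a matched pair consists of the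
pairs `(h, g) ∈ Fix(H) × Fix(G)` such that `g ▷ x = h⁻¹xh` for all `x ∈ H` and
`y ◁ h = gyg⁻¹` for all `y ∈ G`. -/
theorem center_bicross {H G : Type*} [Group H] [Group G]
    {act : G → H → H} {coact : G → H → G} [hmp : Fact (IsMatchedPair act coact)] :
    ∀ x : Bicross act coact,
      x ∈ Subgroup.center (Bicross act coact) ↔
        (x.h ∈ hmp.out.fixH ∧ x.g ∈ hmp.out.fixG ∧
          (∀ y : H, act x.g y = x.h⁻¹ * y * x.h) ∧
          (∀ y : G, coact y x.h = x.g * y * x.g⁻¹)) := by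
  intro x
  simp only [Bicross.mem_center_iff, Bicross.commute_mk_one_iff hmp.out,
    Bicross.commute_one_mk_iff hmp.out, forall_and, IsMatchedPair.mem_fixH,
    IsMatchedPair.mem_fixG]
  tauto
end

section
/- Let H be a group, σ ∈ Aut(H), and let (H, G, α, β) and (H, G', α', β') be matched pairs (with actions written ▷, ◁ and ▷', ◁' respectively, and the multiplication of G' written *). Suppose r : G' → H and v : G' → G are maps satisfying, for all g', g₁', g₂' ∈ G' and h ∈ H: (p1) σ(g' ▷' h)·r(g' ◁' h) = r(g')·(v(g') ▷ σ(h)); (p2) v(g' ◁' h) = v(g') ◁ σ(h); (p3) r(g₁' * g₂') = r(g₁')·(v(g₁') ▷ r(g₂')); (p4) v(g₁' * g₂') = (v(g₁') ◁ r(g₂'))·v(g₂'). Then the map ψ : H ⋈' G' → H ⋈ G defined by ψ(h, g') = (σ(h)r(g'), v(g')) is a group homomorphism between the bicrossed products and satisfies ψ(h, 1_{G'}) = (σ(h), 1_G) for all h ∈ H. -/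
/-! In `H ⋈ G` one has `ψ(h, g') = (σ h, 1) (r g', v g')`. Conditions (p3) and (p4) say that
`g' ↦ (r g', v g')` is multiplicative, and (p1) and (p2) say that
`(r g', v g') (σ h, 1) = ψ(g' ▷' h, g' ◁' h)`, i.e. ψ respects the commutation rule
`(1, g') (h, 1) = (g' ▷' h, g' ◁' h)` of `H ⋈' G'`; together with multiplicativity of `σ` this
gives `ψ(xy) = ψ(x) ψ(y)`. Finally (p3) at `(1, 1)` forces `r 1 = 1` because each `g ▷ -` is
injective, and then (p4) forces `v 1 = 1`. -/

namespace IsMatchedPair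

variable {H G : Type*} [Group H] [Group G] {act : G → H → H} {coact : G → H → G}

theorem act_injective (mp : IsMatchedPair act coact) (g : G) : Function.Injective (act g) := by
  intro a b hab
  simpa only [← mp.mul_act, inv_mul_cancel, mp.one_act] using congrArg (act g⁻¹) hab

variable {G' : Type*} [Group G'] {r : G' → H} {v : G' → G}

theorem map_one_of_map_mul (mp : IsMatchedPair act coact)
    (p3 : ∀ g₁' g₂' : G', r (g₁' * g₂') = r g₁' * act (v g₁') (r g₂')) : r 1 = 1 := by
  have hact : act (v 1) (r 1) = act (v 1) 1 := by
    rw [mp.act_one, ← mul_eq_left (a := r 1), ← p3, one_mul]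
  exact mp.act_injective _ hact

theorem map_one_of_map_mul_coact (mp : IsMatchedPair act coact) (hr : r 1 = 1)
    (p4 : ∀ g₁' g₂' : G', v (g₁' * g₂') = coact (v g₁') (r g₂') * v g₂') : v 1 = 1 := by
  have h := p4 1 1
  rwa [one_mul, hr, mp.coact_one, left_eq_mul] at h

end IsMatchedPair

namespace Bicross

variable {H G G' : Type*} [Group H] [Group G] [Group G']
  {act : G → H → H} {coact : G → H → G} {act' : G' → H → H} {coact' : G' → H → G'}

def pairMap (σ : H →* H) (r : G' → H) (v : G' → G) :
    Bicross act' coact' → Bicross act coact :=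
  fun x => ⟨σ x.h * r x.g, v x.g⟩

variable {σ : H →* H} {r : G' → H} {v : G' → G}

theorem pairMap_mul (mp : IsMatchedPair act coact)
    (p1 : ∀ (g' : G') (h : H), σ (act' g' h) * r (coact' g' h) = r g' * act (v g') (σ h))
    (p2 : ∀ (g' : G') (h : H), v (coact' g' h) = coact (v g') (σ h))
    (p3 : ∀ g₁' g₂' : G', r (g₁' * g₂') = r g₁' * act (v g₁') (r g₂'))
    (p4 : ∀ g₁' g₂' : G', v (g₁' * g₂') = coact (v g₁') (r g₂') * v g₂')
    (x y : Bicross act' coact') :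
    (pairMap σ r v (x * y) : Bicross act coact) = pairMap σ r v x * pairMap σ r v y := by
  obtain ⟨a, p⟩ := x
  obtain ⟨b, q⟩ := y
  ext
  · calc σ (a * act' p b) * r (coact' p b * q)
        = σ a * (σ (act' p b) * r (coact' p b)) * act (coact (v p) (σ b)) (r q) := by
          rw [p3, p2, map_mul]; group
      _ = σ a * r p * act (v p) (σ b * r q) := by
          rw [p1, mp.act_mul]; group
  · show v (coact' p b * q) = coact (v p) (σ b * r q) * v q
    rw [p4, p2, mp.coact_mul]

theorem pairMap_mk_one (mp : IsMatchedPair act coact)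
    (p3 : ∀ g₁' g₂' : G', r (g₁' * g₂') = r g₁' * act (v g₁') (r g₂'))
    (p4 : ∀ g₁' g₂' : G', v (g₁' * g₂') = coact (v g₁') (r g₂') * v g₂') (h : H) :
    (pairMap σ r v (⟨h, 1⟩ : Bicross act' coact') : Bicross act coact) = ⟨σ h, 1⟩ := by
  have hr := mp.map_one_of_map_mul p3
  simp only [pairMap, hr, mul_one, mp.map_one_of_map_mul_coact hr p4]

end Bicross

theorem bicross_hom_of_pair_general {H G G' : Type*} [Group H] [Group G] [Group G']
    {act : G → H → H} {coact : G → H → G} {act' : G' → H → H} {coact' : G' → H → G'}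
    (mp : IsMatchedPair act coact)
    (σ : H ≃* H) (r : G' → H) (v : G' → G)
    (p1 : ∀ (g' : G') (h : H), σ (act' g' h) * r (coact' g' h) = r g' * act (v g') (σ h))
    (p2 : ∀ (g' : G') (h : H), v (coact' g' h) = coact (v g') (σ h))
    (p3 : ∀ g₁' g₂' : G', r (g₁' * g₂') = r g₁' * act (v g₁') (r g₂'))
    (p4 : ∀ g₁' g₂' : G', v (g₁' * g₂') = coact (v g₁') (r g₂') * v g₂') :
    let ψ : Bicross act' coact' → Bicross act coact :=
      fun x => ⟨σ x.h * r x.g, v x.g⟩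
    (∀ x y : Bicross act' coact', ψ (x * y) = ψ x * ψ y) ∧
      ∀ h : H, ψ ⟨h, 1⟩ = ⟨σ h, 1⟩ :=
  ⟨Bicross.pairMap_mul (σ := σ.toMonoidHom) mp p1 p2 p3 p4,
    Bicross.pairMap_mk_one (σ := σ.toMonoidHom) mp p3 p4⟩

/-- Given matched pairs `(H, G, act, coact)` and `(H, G', act', coact')`, an
automorphism `σ` of `H`, and maps `r : G' → H`, `v : G' → G` satisfying the
compatibility conditions (p1)–(p4), the map `ψ(h, g') = (σ(h)r(g'), v(g'))` is a
group homomorphism `H ⋈' G' → H ⋈ G` with `ψ(h, 1) = (σ(h), 1)`. -/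
theorem bicross_hom_of_pair {H G G' : Type*} [Group H] [Group G] [Group G']
    {act : G → H → H} {coact : G → H → G} {act' : G' → H → H} {coact' : G' → H → G'}
    (mp : IsMatchedPair act coact) (mp' : IsMatchedPair act' coact')
    (σ : H ≃* H) (r : G' → H) (v : G' → G)
    (p1 : ∀ (g' : G') (h : H), σ (act' g' h) * r (coact' g' h) = r g' * act (v g') (σ h))
    (p2 : ∀ (g' : G') (h : H), v (coact' g' h) = coact (v g') (σ h))
    (p3 : ∀ g₁' g₂' : G', r (g₁' * g₂') = r g₁' * act (v g₁') (r g₂'))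
    (p4 : ∀ g₁' g₂' : G', v (g₁' * g₂') = coact (v g₁') (r g₂') * v g₂') :
    let ψ : Bicross act' coact' → Bicross act coact :=
      fun x => ⟨σ x.h * r x.g, v x.g⟩
    (∀ x y : Bicross act' coact', ψ (x * y) = ψ x * ψ y) ∧
      ∀ h : H, ψ ⟨h, 1⟩ = ⟨σ h, 1⟩ :=
  bicross_hom_of_pair_general mp σ r v p1 p2 p3 p4
end

section
/- Let H be a group, σ ∈ Aut(H), and let (H, G, α, β) and (H, G', α', β') be matched pairs (actions ▷, ◁ and ▷', ◁'; multiplication of G' written *). Let ψ : H ⋈' G' → H ⋈ G be any group homomorphism between the bicrossed products satisfying ψ(h, 1_{G'}) = (σ(h), 1_G) for all h ∈ H. Then there exist unique maps r : G' → H and v : G' → G such that ψ(h, g') = (σ(h)r(g'), v(g')) for all h ∈ H, g' ∈ G'; moreover r(1_{G'}) = 1_H, v(1_{G'}) = 1_G, and the pair (r, v) satisfies: σ(g' ▷' h)·r(g' ◁' h) = r(g')·(v(g') ▷ σ(h)); v(g' ◁' h) = v(g') ◁ σ(h); r(g₁' * g₂') = r(g₁')·(v(g₁') ▷ r(g₂'));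 and v(g₁' * g₂') = (v(g₁') ◁ r(g₂'))·v(g₂') for all g', g₁', g₂' ∈ G' and h ∈ H. -/
/-! Write `ψ (1, g') = (r g', v g')`. Since `(h, g') = (h, 1) · (1, g')`, multiplicativity
gives `ψ (h, g') = (σ h, 1) · (r g', v g') = (σ h · r g', v g')`, which also pins `r, v` down.
The conditions (p1)–(p4) are the two components of `ψ` applied to the products
`(1, g') · (h, 1) = (g' ▷' h, g' ◁' h)` and `(1, g₁') · (1, g₂') = (1, g₁' g₂')`. -/

namespace Bicross

variable {H G : Type*} [Group H] [Group G] {act : G → H → H} {coact : G → H → G}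

theorem mk_one_mul_mk (mp : IsMatchedPair act coact) (h₁ h₂ : H) (g : G) :
    (⟨h₁, 1⟩ : Bicross act coact) * ⟨h₂, g⟩ = ⟨h₁ * h₂, g⟩ := by
  simp only [mul_def, mp.one_act, mp.one_coact, one_mul]

theorem one_mk_mul_mk_one (g : G) (h : H) :
    (⟨1, g⟩ : Bicross act coact) * ⟨h, 1⟩ = ⟨act g h, coact g h⟩ := by
  simp only [mul_def, one_mul, mul_one]

theorem one_mk_mul_one_mk (mp : IsMatchedPair act coact) (g₁ g₂ : G) :
    (⟨1, g₁⟩ : Bicross act coact) * ⟨1, g₂⟩ = ⟨1, g₁ * g₂⟩ := by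
  simp only [mul_def, mp.act_one, mp.coact_one, one_mul]

variable {G' : Type*} [Group G'] {act' : G' → H → H} {coact' : G' → H → G'}

theorem map_mk_eq (mp : IsMatchedPair act coact) (mp' : IsMatchedPair act' coact')
    {σ : H → H} {ψ : Bicross act' coact' → Bicross act coact}
    (hψ : ∀ x y, ψ (x * y) = ψ x * ψ y) (hσ : ∀ h, ψ ⟨h, 1⟩ = ⟨σ h, 1⟩) (h : H) (g' : G') :
    ψ ⟨h, g'⟩ = ⟨σ h * (ψ ⟨1, g'⟩).h, (ψ ⟨1, g'⟩).g⟩ := by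
  rw [← mul_one h, ← mk_one_mul_mk mp', hψ, hσ, mul_one, mk_one_mul_mk mp]

end Bicross

/-- Any group homomorphism `ψ : H ⋈' G' → H ⋈ G` between the bicrossed products of
two matched pairs satisfying `ψ(h, 1) = (σ(h), 1)` for an automorphism `σ` of `H`
is of the form `ψ(h, g') = (σ(h)r(g'), v(g'))` for unique maps `r : G' → H`,
`v : G' → G`; moreover `r(1) = 1`, `v(1) = 1` and `(r, v)` satisfies the
compatibility conditions (p1)–(p4). -/
theorem pair_of_bicross_hom {H G G' : Type*} [Group H] [Group G] [Group G']
    {act : G → H → H} {coact : G → H → G} {act' : G' → H → H} {coact' : G' → H → G'}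
    (mp : IsMatchedPair act coact) (mp' : IsMatchedPair act' coact')
    (σ : H ≃* H) (ψ : Bicross act' coact' → Bicross act coact)
    (hψ : ∀ x y : Bicross act' coact', ψ (x * y) = ψ x * ψ y)
    (hσ : ∀ h : H, ψ ⟨h, 1⟩ = ⟨σ h, 1⟩) :
    ∃ (r : G' → H) (v : G' → G),
      (∀ (h : H) (g' : G'), ψ ⟨h, g'⟩ = ⟨σ h * r g', v g'⟩) ∧
      (∀ (r' : G' → H) (v' : G' → G),
        (∀ (h : H) (g' : G'), ψ ⟨h, g'⟩ = ⟨σ h * r' g', v' g'⟩) → r' = r ∧ v' = v) ∧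
      r 1 = 1 ∧ v 1 = 1 ∧
      (∀ (g' : G') (h : H), σ (act' g' h) * r (coact' g' h) = r g' * act (v g') (σ h)) ∧
      (∀ (g' : G') (h : H), v (coact' g' h) = coact (v g') (σ h)) ∧
      (∀ g₁' g₂' : G', r (g₁' * g₂') = r g₁' * act (v g₁') (r g₂')) ∧
      (∀ g₁' g₂' : G', v (g₁' * g₂') = coact (v g₁') (r g₂') * v g₂') := by
  set r : G' → H := fun g' => (ψ ⟨1, g'⟩).h
  set v : G' → G := fun g' => (ψ ⟨1, g'⟩).g
  have hmap : ∀ h g', ψ ⟨h, g'⟩ = ⟨σ h * r g', v g'⟩ := Bicross.map_mk_eq mp mp' hψ hσ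
  have hcross : ∀ g' h, (⟨σ (act' g' h) * r (coact' g' h), v (coact' g' h)⟩ :
      Bicross act coact) = ⟨r g' * act (v g') (σ h), coact (v g') (σ h)⟩ := fun g' h => by
    rw [← hmap, ← Bicross.one_mk_mul_mk_one, hψ, hσ, Bicross.mul_def, mul_one]
  have hprod : ∀ g₁' g₂', (⟨r (g₁' * g₂'), v (g₁' * g₂')⟩ : Bicross act coact) =
      ⟨r g₁' * act (v g₁') (r g₂'), coact (v g₁') (r g₂') * v g₂'⟩ := fun g₁' g₂' => by
    change ψ ⟨1, g₁' * g₂'⟩ = ψ ⟨1, g₁'⟩ * ψ ⟨1, g₂'⟩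
    rw [← Bicross.one_mk_mul_one_mk mp', hψ]
  refine ⟨r, v, hmap, fun r' v' hmap' => ?_, ?_, ?_,
    fun g' h => (Bicross.mk.inj (hcross g' h)).1, fun g' h => (Bicross.mk.inj (hcross g' h)).2,
    fun g₁' g₂' => (Bicross.mk.inj (hprod g₁' g₂')).1,
    fun g₁' g₂' => (Bicross.mk.inj (hprod g₁' g₂')).2⟩
  · refine ⟨funext fun g' => ?_, funext fun g' => congrArg Bicross.g (hmap' 1 g').symm⟩
    simpa only [map_one, one_mul] using congrArg Bicross.h (hmap' 1 g').symm
  · change (ψ ⟨1, 1⟩).h = 1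
    rw [hσ, map_one]
  · change (ψ ⟨1, 1⟩).g = 1
    rw [hσ]
end

section
/- Let H be a group, σ ∈ Aut(H), (H, G, α, β) and (H, G', α', β') matched pairs, and let ψ : H ⋈' G' → H ⋈ G be a group homomorphism of the form ψ(h, g') = (σ(h)r(g'), v(g')) for maps r : G' → H and v : G' → G satisfying conditions (p1)–(p4). Then ψ is an isomorphism of groups if and only if the map v : G' → G is bijective. -/
open Function

theorem Prod.map_id_bijective_iff {α β γ : Type*} [Nonempty α] {v : β → γ} :
    Bijective (Prod.map (id : α → α) v) ↔ Bijective v := by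
  refine ⟨fun ⟨hinj, hsurj⟩ => ⟨fun b₁ b₂ hb => ?_, fun c => ?_⟩, bijective_id.prodMap⟩
  · inhabit α
    exact congrArg Prod.snd (@hinj (default, b₁) (default, b₂) (Prod.ext rfl hb))
  · inhabit α
    obtain ⟨p, hp⟩ := hsurj (default, c)
    exact ⟨p.2, congrArg Prod.snd hp⟩

def shearMulRight {K H G : Type*} [Group H] (σ : K ≃ H) (r : G → H) : K × G ≃ H × G :=
  (Equiv.prodComm K G).trans <|
    (Equiv.prodShear (Equiv.refl G) fun g => σ.trans (Equiv.mulRight (r g))).trans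
      (Equiv.prodComm G H)

theorem bijective_prod_mul_right_iff {K H G G' : Type*} [Group H] (σ : K ≃ H) (r : G' → H)
    (v : G' → G) :
    Bijective (fun p : K × G' => (σ p.1 * r p.2, v p.2)) ↔ Bijective v := by
  have hfactor : (fun p : K × G' => (σ p.1 * r p.2, v p.2)) =
      Prod.map id v ∘ shearMulRight σ r := rfl
  rw [hfactor, Equiv.bijective_comp, Prod.map_id_bijective_iff]

def Bicross.equivProd {H G : Type*} (act : G → H → H) (coact : G → H → G) :
    Bicross act coact ≃ H × G where
  toFun x := (x.h, x.g)
  invFun p := ⟨p.1, p.2⟩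

theorem bicross_hom_bijective_iff_general {H G G' : Type*} [Group H]
    {act : G → H → H} {coact : G → H → G} {act' : G' → H → H} {coact' : G' → H → G'}
    (σ : H ≃* H) (r : G' → H) (v : G' → G) :
    Function.Bijective (fun x : Bicross act' coact' =>
      (⟨σ x.h * r x.g, v x.g⟩ : Bicross act coact)) ↔ Function.Bijective v := by
  have hfactor : (fun x : Bicross act' coact' => (⟨σ x.h * r x.g, v x.g⟩ : Bicross act coact)) =
      (Bicross.equivProd act coact).symm ∘ (fun p : H × G' => (σ p.1 * r p.2, v p.2)) ∘
        Bicross.equivProd act' coact' := rfl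
  rw [hfactor, Equiv.comp_bijective, Equiv.bijective_comp]
  exact bijective_prod_mul_right_iff σ.toEquiv r v

/-- A homomorphism `ψ : H ⋈' G' → H ⋈ G` of the form `ψ(h, g') = (σ(h)r(g'), v(g'))`
with `(r, v)` satisfying (p1)–(p4) is an isomorphism of groups if and only if
`v : G' → G` is bijective. -/
theorem bicross_hom_bijective_iff {H G G' : Type*} [Group H] [Group G] [Group G']
    {act : G → H → H} {coact : G → H → G} {act' : G' → H → H} {coact' : G' → H → G'}
    (mp : IsMatchedPair act coact) (mp' : IsMatchedPair act' coact')
    (σ : H ≃* H) (r : G' → H) (v : G' → G)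
    (p1 : ∀ (g' : G') (h : H), σ (act' g' h) * r (coact' g' h) = r g' * act (v g') (σ h))
    (p2 : ∀ (g' : G') (h : H), v (coact' g' h) = coact (v g') (σ h))
    (p3 : ∀ g₁' g₂' : G', r (g₁' * g₂') = r g₁' * act (v g₁') (r g₂'))
    (p4 : ∀ g₁' g₂' : G', v (g₁' * g₂') = coact (v g₁') (r g₂') * v g₂') :
    Function.Bijective (fun x : Bicross act' coact' =>
      (⟨σ x.h * r x.g, v x.g⟩ : Bicross act coact)) ↔ Function.Bijective v :=
  bicross_hom_bijective_iff_general σ r v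
end

section
/- Let (H, G, α, β) be a matched pair of groups and (σ, v, r) a triple where σ ∈ Aut(H), v : G → G is a bijection, r : G → H is a map, v(1_G) = 1_G, r(1_G) = 1_H, and r(v⁻¹((v(g₁) ◁ r(g₂))·v(g₂))) = r(g₁)·(v(g₁) ▷ r(g₂)) for all g₁, g₂ ∈ G. Then the operation g₁ * g₂ := v⁻¹((v(g₁) ◁ r(g₂))·v(g₂)) makes the set G into a group with unit 1_G. -/
/-! Associativity of the deformed product is exactly the cocycle condition on `r` combined with
the two matched-pair compatibilities, `1_G` is a two-sided unit because `v` and `r` fix it,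
and `v⁻¹((v g)⁻¹ ◁ (r g)⁻¹)` is a left inverse of `g`. Left inverses for an associative
operation with a left unit are automatically two-sided. -/

theorem op_eq_of_left_inverses {α : Type*} (op : α → α → α) (e : α)
    (assoc : ∀ a b c, op (op a b) c = op a (op b c)) (one_op : ∀ a, op e a = a)
    {a b c : α} (hba : op b a = e) (hcb : op c b = e) : op a b = e :=
  calc op a b = op (op c b) (op a b) := by rw [hcb, one_op]
    _ = op c (op (op b a) b) := by rw [assoc, assoc]
    _ = e := by rw [hba, one_op, hcb]

section DeformedMul

variable {H G : Type*} [Group G] {coact : G → H → G} {v : G ≃ G} {r : G → H}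

def deformedMul (coact : G → H → G) (v : G ≃ G) (r : G → H) (g₁ g₂ : G) : G :=
  v.symm (coact (v g₁) (r g₂) * v g₂)

@[simp]
theorem apply_deformedMul (g₁ g₂ : G) :
    v (deformedMul coact v r g₁ g₂) = coact (v g₁) (r g₂) * v g₂ :=
  v.apply_symm_apply _

namespace IsMatchedPair

variable [Group H] {act : G → H → H}

theorem deformedMul_assoc (mp : IsMatchedPair act coact)
    (hcr : ∀ g₁ g₂, r (deformedMul coact v r g₁ g₂) = r g₁ * act (v g₁) (r g₂))
    (g₁ g₂ g₃ : G) :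
    deformedMul coact v r (deformedMul coact v r g₁ g₂) g₃ =
      deformedMul coact v r g₁ (deformedMul coact v r g₂ g₃) := by
  apply v.injective
  simp only [apply_deformedMul, hcr, mp.coact_mul, mp.mul_coact, mul_assoc]

theorem one_deformedMul (mp : IsMatchedPair act coact) (hv1 : v 1 = 1) (g : G) :
    deformedMul coact v r 1 g = g := by
  rw [deformedMul, hv1, mp.one_coact, one_mul, v.symm_apply_apply]

theorem deformedMul_one (mp : IsMatchedPair act coact) (hv1 : v 1 = 1) (hr1 : r 1 = 1)
    (g : G) : deformedMul coact v r g 1 = g := by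
  rw [deformedMul, hv1, hr1, mp.coact_one, mul_one, v.symm_apply_apply]

theorem deformedMul_left_inv (mp : IsMatchedPair act coact) (hv1 : v 1 = 1) (g : G) :
    deformedMul coact v r (v.symm (coact (v g)⁻¹ (r g)⁻¹)) g = 1 := by
  rw [deformedMul, v.apply_symm_apply, ← mp.coact_mul, inv_mul_cancel, mp.coact_one,
    inv_mul_cancel, v.symm_apply_eq, hv1]

end IsMatchedPair

end DeformedMul

theorem deformed_mul_group_general {H G : Type*} [Group H] [Group G]
    {act : G → H → H} {coact : G → H → G} (mp : IsMatchedPair act coact)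
    (v : G ≃ G) (r : G → H)
    (hv1 : v 1 = 1) (hr1 : r 1 = 1)
    (hcr : ∀ g₁ g₂ : G,
      r (v.symm (coact (v g₁) (r g₂) * v g₂)) = r g₁ * act (v g₁) (r g₂)) :
    let mulStar : G → G → G := fun g₁ g₂ => v.symm (coact (v g₁) (r g₂) * v g₂)
    (∀ g₁ g₂ g₃ : G, mulStar (mulStar g₁ g₂) g₃ = mulStar g₁ (mulStar g₂ g₃)) ∧
      (∀ g : G, mulStar 1 g = g) ∧ (∀ g : G, mulStar g 1 = g) ∧
      (∀ g : G, ∃ g' : G, mulStar g' g = 1 ∧ mulStar g g' = 1) := by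
  intro mulStar
  have assoc := mp.deformedMul_assoc hcr
  have one_mul := mp.one_deformedMul (r := r) hv1
  have left_inv := mp.deformedMul_left_inv (r := r) hv1
  refine ⟨assoc, one_mul, mp.deformedMul_one hv1 hr1, fun g => ⟨_, left_inv g, ?_⟩⟩
  exact op_eq_of_left_inverses _ 1 assoc one_mul (left_inv g) (left_inv _)

/-- Given a matched pair `(H, G, act, coact)` and a triple `(σ, v, r)` with
`σ ∈ Aut(H)`, `v : G → G` bijective, `r : G → H`, `v(1) = 1`, `r(1) = 1` and
`r(v⁻¹((v(g₁) ◁ r(g₂))·v(g₂))) = r(g₁)·(v(g₁) ▷ r(g₂))`, the operation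
`g₁ * g₂ := v⁻¹((v(g₁) ◁ r(g₂))·v(g₂))` makes the set `G` a group with unit `1_G`. -/
theorem deformed_mul_group {H G : Type*} [Group H] [Group G]
    {act : G → H → H} {coact : G → H → G} (mp : IsMatchedPair act coact)
    (σ : H ≃* H) (v : G ≃ G) (r : G → H)
    (hv1 : v 1 = 1) (hr1 : r 1 = 1)
    (hcr : ∀ g₁ g₂ : G,
      r (v.symm (coact (v g₁) (r g₂) * v g₂)) = r g₁ * act (v g₁) (r g₂)) :
    let mulStar : G → G → G := fun g₁ g₂ => v.symm (coact (v g₁) (r g₂) * v g₂)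
    (∀ g₁ g₂ g₃ : G, mulStar (mulStar g₁ g₂) g₃ = mulStar g₁ (mulStar g₂ g₃)) ∧
      (∀ g : G, mulStar 1 g = g) ∧ (∀ g : G, mulStar g 1 = g) ∧
      (∀ g : G, ∃ g' : G, mulStar g' g = 1 ∧ mulStar g g' = 1) :=
  deformed_mul_group_general mp v r hv1 hr1 hcr
end

section
/- Let H and G be two fixed groups and define, on the set MP(H,G) of all pairs (α, β) such that (H, G, α, β) is a matched pair, the relation (α, β) ≈₁ (α', β') to mean: there exist maps r : G → H and v : G → G with v bijective such that (s1) (g ▷' h)·r(g ◁' h) = r(g)·(v(g) ▷ h), (s2) v(g ◁' h) = v(g) ◁ h, (s3) r(g₁g₂) = r(g₁)·(v(g₁) ▷ r(g₂)), and (s4) v(g₁g₂) = (v(g₁) ◁ r(g₂))·v(g₂) for all h ∈ H, g, g₁, g₂ ∈ G. Then (α, β) ≈₁ (α', β') if and only if there exists a group isomorphism ψ : H ⋈' G → H ⋈ G between the corresponding bicrossed products with ψ(h, 1_G) = (h, 1_G) for all h ∈ H; in particular ≈₁ is an equivalence relation on MP(H,G). -/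
/-- The set `MP(H, G)` of all pairs `(α, β)` such that `(H, G, α, β)` is a matched
pair of groups. -/
def MP (H G : Type*) [Group H] [Group G] : Type _ :=
  {p : (G → H → H) × (G → H → G) // IsMatchedPair p.1 p.2}

/-- The relation `(α, β) ≈₁ (α', β')`: there exist maps `r : G → H` and a bijection
`v : G → G` satisfying the compatibility conditions (s1)–(s4). -/
def Rel1 {H G : Type*} [Group H] [Group G]
    (act : G → H → H) (coact : G → H → G)
    (act' : G → H → H) (coact' : G → H → G) : Prop :=
  ∃ (r : G → H) (v : G → G), Function.Bijective v ∧
    (∀ (g : G) (h : H), act' g h * r (coact' g h) = r g * act (v g) h) ∧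
    (∀ (g : G) (h : H), v (coact' g h) = coact (v g) h) ∧
    (∀ g₁ g₂ : G, r (g₁ * g₂) = r g₁ * act (v g₁) (r g₂)) ∧
    (∀ g₁ g₂ : G, v (g₁ * g₂) = coact (v g₁) (r g₂) * v g₂)

section Rel1Map

variable {H G : Type*} [Group H] {r : G → H} {v : G → G}

def rel1Map (r : G → H) (v : G → G) (x : H × G) : H × G :=
  (x.1 * r x.2, v x.2)

@[simp]
theorem rel1Map_mk (r : G → H) (v : G → G) (h : H) (g : G) :
    rel1Map r v (h, g) = (h * r g, v g) :=
  rfl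

theorem bijective_rel1Map_iff : Function.Bijective (rel1Map r v) ↔ Function.Bijective v := by
  refine ⟨fun hψ => ⟨fun g₁ g₂ he => ?_, fun g => ?_⟩, fun hv => ⟨?_, ?_⟩⟩
  · have : rel1Map r v (r g₁ * (r g₂)⁻¹, g₂) = rel1Map r v (1, g₁) := by
      simp [he]
    exact (congrArg Prod.snd (hψ.injective this)).symm
  · obtain ⟨⟨_, g'⟩, hg'⟩ := hψ.surjective (1, g)
    exact ⟨g', congrArg Prod.snd hg'⟩
  · rintro ⟨h₁, g₁⟩ ⟨h₂, g₂⟩ he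
    simp only [rel1Map_mk, Prod.mk.injEq] at he
    obtain ⟨e₁, e₂⟩ := he
    obtain rfl := hv.injective e₂
    rw [mul_right_cancel e₁]
  · rintro ⟨h, g⟩
    obtain ⟨g', rfl⟩ := hv.surjective g
    exact ⟨(h * (r g')⁻¹, g'), by simp⟩

end Rel1Map

section Rel1

variable {H G : Type*} [Group H] [Group G]
  {act : G → H → H} {coact : G → H → G} {act' : G → H → H} {coact' : G → H → G}
  {r : G → H} {v : G → G}

theorem rel1Map_fixes_left_iff :
    (∀ h : H, rel1Map r v (h, 1) = (h, 1)) ↔ r 1 = 1 ∧ v 1 = 1 := by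
  simp only [rel1Map_mk, Prod.mk.injEq, mul_eq_left]
  exact ⟨fun hψ => hψ 1, fun h1 _ => h1⟩

theorem one_eq_one_of_rel1_cocycle (mp : IsMatchedPair act coact)
    (s3 : ∀ g₁ g₂ : G, r (g₁ * g₂) = r g₁ * act (v g₁) (r g₂))
    (s4 : ∀ g₁ g₂ : G, v (g₁ * g₂) = coact (v g₁) (r g₂) * v g₂) :
    r 1 = 1 ∧ v 1 = 1 := by
  have hr : r 1 = 1 := by
    have h := s3 1 1
    rw [mul_one, left_eq_mul, ← mp.act_one (v 1)] at h
    exact mp.act_injective _ h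
  refine ⟨hr, ?_⟩
  have h := s4 1 1
  rwa [mul_one, hr, mp.coact_one, left_eq_mul] at h

theorem rel1Map_mul_iff (mp : IsMatchedPair act coact) (mp' : IsMatchedPair act' coact')
    (hr : r 1 = 1) (hv : v 1 = 1) :
    (∀ x y : H × G, rel1Map r v (bicrossMul act' coact' x y)
        = bicrossMul act coact (rel1Map r v x) (rel1Map r v y)) ↔
      (∀ (g : G) (h : H), act' g h * r (coact' g h) = r g * act (v g) h) ∧
      (∀ (g : G) (h : H), v (coact' g h) = coact (v g) h) ∧
      (∀ g₁ g₂ : G, r (g₁ * g₂) = r g₁ * act (v g₁) (r g₂)) ∧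
      (∀ g₁ g₂ : G, v (g₁ * g₂) = coact (v g₁) (r g₂) * v g₂) := by
  constructor
  · intro hmul
    have e₁ : ∀ (g : G) (h : H), _ := fun g h => Prod.ext_iff.mp (hmul (1, g) (h, 1))
    have e₂ : ∀ g₁ g₂ : G, _ := fun g₁ g₂ => Prod.ext_iff.mp (hmul (1, g₁) (1, g₂))
    simp only [bicrossMul, rel1Map_mk, one_mul, mul_one, hr, hv, mp'.act_one,
      mp'.coact_one] at e₁ e₂
    exact ⟨fun g h => (e₁ g h).1, fun g h => (e₁ g h).2,
      fun g₁ g₂ => (e₂ g₁ g₂).1, fun g₁ g₂ => (e₂ g₁ g₂).2⟩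
  · rintro ⟨s1, s2, s3, s4⟩ ⟨h₁, g₁⟩ ⟨h₂, g₂⟩
    simp only [bicrossMul, rel1Map_mk, Prod.mk.injEq]
    refine ⟨?_, by rw [s4, s2, mp.coact_mul]⟩
    calc h₁ * act' g₁ h₂ * r (coact' g₁ h₂ * g₂)
        = h₁ * (act' g₁ h₂ * r (coact' g₁ h₂)) * act (v (coact' g₁ h₂)) (r g₂) := by
          rw [s3]; group
      _ = h₁ * r g₁ * act (v g₁) (h₂ * r g₂) := by
          rw [s1, s2, mp.act_mul]; group

theorem eq_rel1Map_of_map_mul (mp : IsMatchedPair act coact) (mp' : IsMatchedPair act' coact')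
    {ψ : H × G → H × G}
    (hmul : ∀ x y, ψ (bicrossMul act' coact' x y) = bicrossMul act coact (ψ x) (ψ y))
    (hH : ∀ h : H, ψ (h, 1) = (h, 1)) :
    ψ = rel1Map (fun g => (ψ (1, g)).1) (fun g => (ψ (1, g)).2) := by
  funext ⟨h, g⟩
  have hx : (h, g) = bicrossMul act' coact' (h, 1) (1, g) := by
    simp [bicrossMul, mp'.one_act, mp'.coact_one]
  conv_lhs => rw [hx, hmul, hH]
  simp [bicrossMul, mp.one_act, mp.one_coact]

end Rel1

section BicrossIso

variable {H G : Type*} [Group H] [Group G]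

/-- `ψ : H ⋈' G → H ⋈ G` is an isomorphism fixing `H`,
where `⋈'` is built from `(act', coact')`. -/
def IsBicrossIsoFixingLeft (act : G → H → H) (coact : G → H → G)
    (act' : G → H → H) (coact' : G → H → G) (ψ : H × G → H × G) : Prop :=
  (∀ x y : H × G, ψ (bicrossMul act' coact' x y) = bicrossMul act coact (ψ x) (ψ y)) ∧
    Function.Bijective ψ ∧ ∀ h : H, ψ (h, 1) = (h, 1)

namespace IsBicrossIsoFixingLeft

variable {act act' act'' : G → H → H} {coact coact' coact'' : G → H → G}
  {ψ χ : H × G → H × G}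

theorem id : IsBicrossIsoFixingLeft act coact act coact id :=
  ⟨fun _ _ => rfl, Function.bijective_id, fun _ => rfl⟩

theorem symm (hψ : IsBicrossIsoFixingLeft act coact act' coact' ψ) :
    IsBicrossIsoFixingLeft act' coact' act coact (Equiv.ofBijective ψ hψ.2.1).symm := by
  obtain ⟨hmul, hbij, hH⟩ := hψ
  set e := Equiv.ofBijective ψ hbij
  refine ⟨fun x y => e.injective ?_, e.symm.bijective, fun h => e.injective ?_⟩
  · change ψ _ = ψ _
    rw [hmul]
    simp only [e, Equiv.ofBijective_apply_symm_apply]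
  · simp only [e, Equiv.apply_symm_apply, Equiv.ofBijective_apply, hH]

theorem comp (hψ : IsBicrossIsoFixingLeft act coact act' coact' ψ)
    (hχ : IsBicrossIsoFixingLeft act' coact' act'' coact'' χ) :
    IsBicrossIsoFixingLeft act coact act'' coact'' (ψ ∘ χ) :=
  ⟨fun x y => by simp only [Function.comp_apply, hχ.1, hψ.1], hψ.2.1.comp hχ.2.1,
    fun h => by simp only [Function.comp_apply, hχ.2.2, hψ.2.2]⟩

end IsBicrossIsoFixingLeft

theorem rel1_iff_exists_isBicrossIsoFixingLeft {act : G → H → H} {coact : G → H → G}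
    {act' : G → H → H} {coact' : G → H → G}
    (mp : IsMatchedPair act coact) (mp' : IsMatchedPair act' coact') :
    Rel1 act coact act' coact' ↔ ∃ ψ, IsBicrossIsoFixingLeft act coact act' coact' ψ := by
  constructor
  · rintro ⟨r, v, hv, s1, s2, s3, s4⟩
    obtain ⟨hr, hv1⟩ := one_eq_one_of_rel1_cocycle mp s3 s4
    exact ⟨rel1Map r v, (rel1Map_mul_iff mp mp' hr hv1).mpr ⟨s1, s2, s3, s4⟩,
      bijective_rel1Map_iff.mpr hv, rel1Map_fixes_left_iff.mpr ⟨hr, hv1⟩⟩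
  · rintro ⟨ψ, hmul, hbij, hH⟩
    obtain ⟨r, v, rfl⟩ : ∃ r v, ψ = rel1Map r v :=
      ⟨_, _, eq_rel1Map_of_map_mul mp mp' hmul hH⟩
    obtain ⟨hr, hv⟩ := rel1Map_fixes_left_iff.mp hH
    exact ⟨_, _, bijective_rel1Map_iff.mp hbij, (rel1Map_mul_iff mp mp' hr hv).mp hmul⟩

end BicrossIso

/-- **First Schreier type theorem, key step.** `(α, β) ≈₁ (α', β')` holds if and
only if there exists an isomorphism of groups `ψ : H ⋈' G → H ⋈ G` between the
corresponding bicrossed products with `ψ(h, 1) = (h, 1)` for all `h ∈ H`; in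
particular `≈₁` is an equivalence relation on `MP(H, G)`. -/
theorem rel1_iff_iso_fixing_H {H G : Type*} [Group H] [Group G] :
    (∀ (act : G → H → H) (coact : G → H → G) (act' : G → H → H) (coact' : G → H → G),
      IsMatchedPair act coact → IsMatchedPair act' coact' →
      (Rel1 act coact act' coact' ↔
        ∃ ψ : H × G → H × G,
          (∀ x y : H × G,
            ψ (bicrossMul act' coact' x y) = bicrossMul act coact (ψ x) (ψ y)) ∧
          Function.Bijective ψ ∧ ∀ h : H, ψ (h, 1) = (h, 1))) ∧
    Equivalence (fun p q : MP H G => Rel1 p.val.1 p.val.2 q.val.1 q.val.2) := by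
  have key (p q : MP H G) := rel1_iff_exists_isBicrossIsoFixingLeft p.2 q.2
  refine ⟨fun _ _ _ _ mp mp' => rel1_iff_exists_isBicrossIsoFixingLeft mp mp', ?_, ?_, ?_⟩
  · exact fun p => (key p p).mpr ⟨_, .id⟩
  · intro p q hpq
    obtain ⟨ψ, hψ⟩ := (key p q).mp hpq
    exact (key q p).mpr ⟨_, hψ.symm⟩
  · intro p q s hpq hqs
    obtain ⟨ψ, hψ⟩ := (key p q).mp hpq
    obtain ⟨χ, hχ⟩ := (key q s).mp hqs
    exact (key p s).mpr ⟨_, hψ.comp hχ⟩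
end

section
/- Let H, G be groups, let α : G × H → H be an action of G on H as group automorphisms (written g ▷ h), and let (H, G, α', β') be a matched pair (actions ▷', ◁'). The following are equivalent: (1) there exists a group isomorphism ψ : H ⋈' G → H ⋉_α G with ψ(h, 1_G) = (h, 1_G) for all h ∈ H; (2) the action β' is trivial (g ◁' h = g for all g, h) and there exists a pair (r, v) with v ∈ Aut(G) and r : G → H a map such that r(g₁g₂) = r(g₁)·(v(g₁) ▷ r(g₂)) for all g₁, g₂ ∈ G, and g ▷' h = r(g)·(v(g) ▷ h)·r(g)⁻¹ for all g ∈ G, h ∈ H. In this case the isomorphism is given by ψ(h, g) = (h r(g), v(g)). -/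
/-!
An isomorphism `ψ` fixing `H` is determined by its values on `G`: since
`(h, g) = (h, 1)(1, g)` in `H ⋈' G`, we get `ψ(h, g) = (h r(g), v(g))` with
`(r(g), v(g)) := ψ(1, g)`. Multiplicativity on `(1, g₁)(1, g₂) = (1, g₁g₂)` says that `v` is
an endomorphism and `r` a `v`-twisted cocycle; on `(1, g)(h, 1) = (g ▷' h, g ◁' h)` it says
`v(g ◁' h) = v(g)` and `(g ▷' h) r(g ◁' h) = r(g) (v(g) ▷ h)`. Bijectivity of `ψ` is
bijectivity of `v`, so `◁'` is trivial and `▷'` is the twisted conjugation. Conversely, these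
identities make `(h, g) ↦ (h r(g), v(g))` multiplicative by a direct computation.
-/

open Function

section

variable {H G : Type*} [Group H]

def twistMap (r : G → H) (v : G → G) (x : H × G) : H × G :=
  (x.1 * r x.2, v x.2)

theorem bijective_twistMap_iff {r : G → H} {v : G → G} :
    Bijective (twistMap r v) ↔ Bijective v := by
  constructor
  · intro hψ
    refine ⟨fun a b hab => ?_, fun g => ?_⟩
    · have : twistMap r v (r b * (r a)⁻¹, a) = twistMap r v (1, b) := by
        simp [twistMap, hab]
      exact congrArg Prod.snd (hψ.1 this)
    · obtain ⟨x, hx⟩ := hψ.2 (1, g)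
      exact ⟨x.2, congrArg Prod.snd hx⟩
  · intro hv
    refine ⟨?_, ?_⟩
    · rintro ⟨h₁, g₁⟩ ⟨h₂, g₂⟩ heq
      simp only [twistMap, Prod.mk.injEq] at heq
      obtain rfl : g₁ = g₂ := hv.1 heq.2
      rw [mul_right_cancel heq.1]
    · rintro ⟨h, g⟩
      obtain ⟨g', rfl⟩ := hv.2 g
      exact ⟨(h * (r g')⁻¹, g'), by simp [twistMap]⟩

variable [Group G]

theorem bicrossMul_mk_one_one_mk {act : G → H → H} {coact : G → H → G}
    (mp : IsMatchedPair act coact) (h : H) (g : G) :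
    bicrossMul act coact (h, 1) (1, g) = (h, g) := by
  simp [bicrossMul, mp.act_one, mp.coact_one]

theorem bicrossMul_one_mk_one_mk {act : G → H → H} {coact : G → H → G}
    (mp : IsMatchedPair act coact) (g₁ g₂ : G) :
    bicrossMul act coact (1, g₁) (1, g₂) = (1, g₁ * g₂) := by
  simp [bicrossMul, mp.act_one, mp.coact_one]

theorem bicrossMul_one_mk_mk_one (act : G → H → H) (coact : G → H → G) (g : G) (h : H) :
    bicrossMul act coact (1, g) (h, 1) = (act g h, coact g h) := by
  simp [bicrossMul]

/-- `ψ` is multiplicative from `H ⋈' G` to `H ⋉_act G`, the latter being the bicrossed product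
with trivial right action. -/
def IsBicrossSemidirectHom (act' : G → H → H) (coact' : G → H → G) (act : G → H → H)
    (ψ : H × G → H × G) : Prop :=
  ∀ x y, ψ (bicrossMul act' coact' x y) = bicrossMul act (fun g _ => g) (ψ x) (ψ y)

variable {r : G → H} {v : G → G}

theorem forall_twistMap_mk_one_iff :
    (∀ h : H, twistMap r v (h, 1) = (h, 1)) ↔ r 1 = 1 ∧ v 1 = 1 := by
  simp [twistMap]

variable {act act' : G → H → H} {coact' : G → H → G}

theorem isBicrossSemidirectHom_twistMap
    (h3 : ∀ (g : G) (h₁ h₂ : H), act g (h₁ * h₂) = act g h₁ * act g h₂) (v : G →* G)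
    (hco : ∀ g h, coact' g h = g)
    (hr : ∀ g₁ g₂, r (g₁ * g₂) = r g₁ * act (v g₁) (r g₂))
    (ha : ∀ g h, act' g h = r g * act (v g) h * (r g)⁻¹) :
    IsBicrossSemidirectHom act' coact' act (twistMap r v) := by
  rintro ⟨h₁, g₁⟩ ⟨h₂, g₂⟩
  simp only [twistMap, bicrossMul, hco, hr, ha, h3, map_mul]
  refine Prod.ext ?_ rfl
  group

theorem twistMap_isFixingIso (h1 : ∀ h : H, act 1 h = h)
    (h3 : ∀ (g : G) (h₁ h₂ : H), act g (h₁ * h₂) = act g h₁ * act g h₂) (v : G ≃* G)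
    (hco : ∀ g h, coact' g h = g)
    (hr : ∀ g₁ g₂, r (g₁ * g₂) = r g₁ * act (v g₁) (r g₂))
    (ha : ∀ g h, act' g h = r g * act (v g) h * (r g)⁻¹) :
    IsBicrossSemidirectHom act' coact' act (twistMap r v) ∧ Bijective (twistMap r v) ∧
      ∀ h, twistMap r v (h, 1) = (h, 1) := by
  have hr1 : r 1 = 1 := by simpa [h1] using hr 1 1
  exact ⟨isBicrossSemidirectHom_twistMap h3 v.toMonoidHom hco hr ha,
    bijective_twistMap_iff.2 v.bijective, forall_twistMap_mk_one_iff.2 ⟨hr1, map_one v⟩⟩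

namespace IsBicrossSemidirectHom

theorem eq_twistMap {ψ : H × G → H × G} (mp' : IsMatchedPair act' coact')
    (h1 : ∀ h : H, act 1 h = h) (hψ : IsBicrossSemidirectHom act' coact' act ψ)
    (hH : ∀ h : H, ψ (h, 1) = (h, 1)) :
    ψ = twistMap (fun g => (ψ (1, g)).1) (fun g => (ψ (1, g)).2) := by
  funext ⟨h, g⟩
  calc ψ (h, g) = ψ (bicrossMul act' coact' (h, 1) (1, g)) := by
        rw [bicrossMul_mk_one_one_mk mp']
    _ = _ := by rw [hψ, hH]; simp [bicrossMul, twistMap, h1]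

theorem twistMap_one_mk_one_mk (mp' : IsMatchedPair act' coact')
    (hψ : IsBicrossSemidirectHom act' coact' act (twistMap r v)) (g₁ g₂ : G) :
    v (g₁ * g₂) = v g₁ * v g₂ ∧ r (g₁ * g₂) = r g₁ * act (v g₁) (r g₂) := by
  have e := hψ (1, g₁) (1, g₂)
  rw [bicrossMul_one_mk_one_mk mp'] at e
  simpa [twistMap, bicrossMul, and_comm] using e

theorem twistMap_one_mk_mk_one (hψ : IsBicrossSemidirectHom act' coact' act (twistMap r v))
    (hr1 : r 1 = 1) (hv1 : v 1 = 1) (g : G) (h : H) :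
    act' g h * r (coact' g h) = r g * act (v g) h ∧ v (coact' g h) = v g := by
  have e := hψ (1, g) (h, 1)
  rw [bicrossMul_one_mk_mk_one] at e
  simpa [twistMap, bicrossMul, hr1, hv1] using e

end IsBicrossSemidirectHom

end

theorem bicross_iso_leftSemidirect_iff_general {H G : Type*} [Group H] [Group G]
    {act : G → H → H} {act' : G → H → H} {coact' : G → H → G}
    (h1 : ∀ h : H, act 1 h = h)
    (h3 : ∀ (g : G) (h₁ h₂ : H), act g (h₁ * h₂) = act g h₁ * act g h₂)
    (mp' : IsMatchedPair act' coact') :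
    ((∃ ψ : H × G → H × G,
        (∀ x y : H × G,
          ψ (bicrossMul act' coact' x y) =
            bicrossMul act (fun g _ => g) (ψ x) (ψ y)) ∧
        Function.Bijective ψ ∧ ∀ h : H, ψ (h, 1) = (h, 1)) ↔
      ((∀ (g : G) (h : H), coact' g h = g) ∧
        ∃ (v : G ≃* G) (r : G → H),
          (∀ g₁ g₂ : G, r (g₁ * g₂) = r g₁ * act (v g₁) (r g₂)) ∧
          (∀ (g : G) (h : H), act' g h = r g * act (v g) h * (r g)⁻¹))) ∧
    ∀ (v : G ≃* G) (r : G → H),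
      (∀ (g : G) (h : H), coact' g h = g) →
      (∀ g₁ g₂ : G, r (g₁ * g₂) = r g₁ * act (v g₁) (r g₂)) →
      (∀ (g : G) (h : H), act' g h = r g * act (v g) h * (r g)⁻¹) →
      ((∀ x y : H × G,
          (fun x : H × G => (x.1 * r x.2, v x.2)) (bicrossMul act' coact' x y) =
            bicrossMul act (fun g _ => g)
              ((fun x : H × G => (x.1 * r x.2, v x.2)) x)
              ((fun x : H × G => (x.1 * r x.2, v x.2)) y)) ∧
        Function.Bijective (fun x : H × G => (x.1 * r x.2, v x.2)) ∧
        ∀ h : H, (fun x : H × G => (x.1 * r x.2, v x.2)) (h, 1) = (h, 1)) := by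
  refine ⟨⟨?_, fun ⟨hco, v, r, hr, ha⟩ => ⟨_, twistMap_isFixingIso h1 h3 v hco hr ha⟩⟩,
    fun v r => twistMap_isFixingIso h1 h3 v⟩
  rintro ⟨ψ, hψ : IsBicrossSemidirectHom act' coact' act ψ, hbij, hH⟩
  obtain ⟨r, v, rfl⟩ : ∃ r v, ψ = twistMap r v := ⟨_, _, hψ.eq_twistMap mp' h1 hH⟩
  obtain ⟨hr1, hv1⟩ := forall_twistMap_mk_one_iff.1 hH
  have hv := bijective_twistMap_iff.1 hbij
  have hco : ∀ g h, coact' g h = g := fun g h => hv.1 (hψ.twistMap_one_mk_mk_one hr1 hv1 g h).2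
  let vHom : G →* G := MonoidHom.mk' v fun a b => (hψ.twistMap_one_mk_one_mk mp' a b).1
  refine ⟨hco, MulEquiv.ofBijective vHom hv, r,
    fun a b => (hψ.twistMap_one_mk_one_mk mp' a b).2, fun g h => ?_⟩
  have e := (hψ.twistMap_one_mk_mk_one hr1 hv1 g h).1
  rw [hco] at e
  exact eq_mul_inv_of_mul_eq e

/-- A bicrossed product `H ⋈' G` is isomorphic, by an isomorphism fixing `H`, to a
left semidirect product `H ⋉_α G` (for `α` an action of `G` on `H` as group
automorphisms) if and only if `β'` is trivial and there is a pair `(r, v)` with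
`v ∈ Aut(G)` and `r : G → H` with `r(g₁g₂) = r(g₁)(v(g₁) ▷ r(g₂))` such that
`g ▷' h = r(g)(v(g) ▷ h)r(g)⁻¹`; in this case the isomorphism is
`ψ(h, g) = (h r(g), v(g))`. -/
theorem bicross_iso_leftSemidirect_iff {H G : Type*} [Group H] [Group G]
    {act : G → H → H} {act' : G → H → H} {coact' : G → H → G}
    (h1 : ∀ h : H, act 1 h = h)
    (h2 : ∀ (g₁ g₂ : G) (h : H), act (g₁ * g₂) h = act g₁ (act g₂ h))
    (h3 : ∀ (g : G) (h₁ h₂ : H), act g (h₁ * h₂) = act g h₁ * act g h₂)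
    (mp' : IsMatchedPair act' coact') :
    ((∃ ψ : H × G → H × G,
        (∀ x y : H × G,
          ψ (bicrossMul act' coact' x y) =
            bicrossMul act (fun g _ => g) (ψ x) (ψ y)) ∧
        Function.Bijective ψ ∧ ∀ h : H, ψ (h, 1) = (h, 1)) ↔
      ((∀ (g : G) (h : H), coact' g h = g) ∧
        ∃ (v : G ≃* G) (r : G → H),
          (∀ g₁ g₂ : G, r (g₁ * g₂) = r g₁ * act (v g₁) (r g₂)) ∧
          (∀ (g : G) (h : H), act' g h = r g * act (v g) h * (r g)⁻¹))) ∧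
    ∀ (v : G ≃* G) (r : G → H),
      (∀ (g : G) (h : H), coact' g h = g) →
      (∀ g₁ g₂ : G, r (g₁ * g₂) = r g₁ * act (v g₁) (r g₂)) →
      (∀ (g : G) (h : H), act' g h = r g * act (v g) h * (r g)⁻¹) →
      ((∀ x y : H × G,
          (fun x : H × G => (x.1 * r x.2, v x.2)) (bicrossMul act' coact' x y) =
            bicrossMul act (fun g _ => g)
              ((fun x : H × G => (x.1 * r x.2, v x.2)) x)
              ((fun x : H × G => (x.1 * r x.2, v x.2)) y)) ∧
        Function.Bijective (fun x : H × G => (x.1 * r x.2, v x.2)) ∧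
        ∀ h : H, (fun x : H × G => (x.1 * r x.2, v x.2)) (h, 1) = (h, 1)) :=
  bicross_iso_leftSemidirect_iff_general h1 h3 mp'
end

section
/- Let H, G be groups, β : G × H → G an action of H on G as group automorphisms (written g ◁ h), and (H, G, α, β) a matched pair (left action written g ▷ h). Set Ker(β) := {h ∈ H | g ◁ h = g for all g ∈ G}. The following are equivalent: (1) there exists a group isomorphism ψ : H ⋈ G → H ⋊_β G satisfying ψ(h, 1_G) = (h, 1_G) for all h ∈ H and π_G ∘ ψ = π_G; (2) there exists a group homomorphism r : G → Ker(β) ≤ H such that g ▷ h = r(g)·h·r(g ◁ h)⁻¹ for all g ∈ G, h ∈ H. -/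
/-!
Since `(h, 1) · (1, g) = (h, g)` in `H ⋈ G`, a multiplicative `ψ` fixing `H` and the `G`-coordinate
is determined by `r g := (ψ (1, g)).1`: it is the shear `(h, g) ↦ (h · r g, g)`. Such a shear is
always bijective, and comparing `ψ` on the products `(1, x) · (1, g)` and `(1, g) · (h, 1)` shows
that it is multiplicative exactly when `r` is a homomorphism into `Ker β` satisfying
`g ▷ h = r g · h · (r (g ◁ h))⁻¹`.
-/

def shearMap {H G : Type*} [Group H] (r : G → H) (x : H × G) : H × G :=
  (x.1 * r x.2, x.2)

theorem shearMap_bijective {H G : Type*} [Group H] (r : G → H) : Function.Bijective (shearMap r) :=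
  Function.bijective_iff_has_inverse.mpr
    ⟨fun x => (x.1 * (r x.2)⁻¹, x.2), fun x => by simp [shearMap], fun x => by simp [shearMap]⟩

namespace IsMatchedPair

variable {H G : Type*} [Group H] [Group G] {act : G → H → H} {coact : G → H → G}

theorem bicrossMul_mk_one_one_mk (mp : IsMatchedPair act coact) (h : H) (g : G) :
    bicrossMul act coact (h, 1) (1, g) = (h, g) := by
  simp [bicrossMul, mp.one_act, mp.coact_one]

theorem eq_shearMap (mp : IsMatchedPair act coact) {ψ : H × G → H × G}
    (hmul : ∀ x y : H × G,
      ψ (bicrossMul act coact x y) = bicrossMul (fun (_ : G) (h : H) => h) coact (ψ x) (ψ y))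
    (hH : ∀ h : H, ψ (h, 1) = (h, 1)) (hG : ∀ x : H × G, (ψ x).2 = x.2) :
    ψ = shearMap fun g => (ψ (1, g)).1 := by
  funext ⟨h, g⟩
  have hψg : ψ (1, g) = ((ψ (1, g)).1, g) := Prod.ext rfl (hG (1, g))
  have e := hmul (h, 1) (1, g)
  rw [mp.bicrossMul_mk_one_one_mk, hH, hψg] at e
  simpa [bicrossMul, shearMap, mp.one_coact] using e

theorem shearMap_mul_iff (mp : IsMatchedPair act coact) (r : G → H) :
    (∀ x y : H × G, shearMap r (bicrossMul act coact x y) =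
        bicrossMul (fun (_ : G) (h : H) => h) coact (shearMap r x) (shearMap r y)) ↔
      (∀ g x : G, coact x (r g) = x) ∧
        (∀ g₁ g₂ : G, r (g₁ * g₂) = r g₁ * r g₂) ∧
        ∀ (g : G) (h : H), act g h = r g * h * (r (coact g h))⁻¹ := by
  constructor
  · intro hmul
    have hpair : ∀ x g : G, r (x * g) = r x * r g ∧ coact x (r g) = x := by
      intro x g
      have e := hmul (1, x) (1, g)
      simp only [bicrossMul, shearMap, Prod.mk.injEq, mp.act_one, mp.coact_one, one_mul] at e
      exact ⟨e.1, (mul_right_cancel e.2).symm⟩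
    have hr1 : r 1 = 1 := by simpa using (hpair 1 1).1
    refine ⟨fun g x => (hpair x g).2, fun g₁ g₂ => (hpair g₁ g₂).1, fun g h => ?_⟩
    have e := hmul (1, g) (h, 1)
    simp only [bicrossMul, shearMap, Prod.mk.injEq, hr1, one_mul, mul_one] at e
    exact eq_mul_inv_of_mul_eq e.1
  · rintro ⟨hker, hrmul, hact⟩ ⟨h₁, g₁⟩ ⟨h₂, g₂⟩
    simp only [bicrossMul, shearMap, Prod.mk.injEq]
    refine ⟨?_, by rw [mp.coact_mul, hker]⟩
    rw [hrmul, hact]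
    group

end IsMatchedPair

theorem bicross_iso_rightSemidirect_fixing_H_and_G_iff_general {H G : Type*} [Group H] [Group G]
    {act : G → H → H} {coact : G → H → G}
    (mp : IsMatchedPair act coact) :
    (∃ ψ : H × G → H × G,
        (∀ x y : H × G,
          ψ (bicrossMul act coact x y) =
            bicrossMul (fun (_ : G) (h : H) => h) coact (ψ x) (ψ y)) ∧
        Function.Bijective ψ ∧
        (∀ h : H, ψ (h, 1) = (h, 1)) ∧
        (∀ x : H × G, (ψ x).2 = x.2)) ↔
      ∃ r : G → H,
        (∀ g x : G, coact x (r g) = x) ∧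
        (∀ g₁ g₂ : G, r (g₁ * g₂) = r g₁ * r g₂) ∧
        ∀ (g : G) (h : H), act g h = r g * h * (r (coact g h))⁻¹ := by
  constructor
  · rintro ⟨ψ, hmul, -, hH, hG⟩
    have hψ := mp.eq_shearMap hmul hH hG
    rw [hψ] at hmul
    exact ⟨_, (mp.shearMap_mul_iff _).mp hmul⟩
  · rintro ⟨r, hr⟩
    have hr1 : r 1 = 1 := by simpa using hr.2.1 1 1
    exact ⟨shearMap r, (mp.shearMap_mul_iff r).mpr hr, shearMap_bijective r,
      fun h => by simp [shearMap, hr1], fun _ => rfl⟩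

/-- For a matched pair `(H, G, α, β)` with `β` an action of `H` on `G` as group
automorphisms, the bicrossed product `H ⋈ G` is isomorphic to the right semidirect
product `H ⋊_β G` by an isomorphism `ψ` with `ψ(h, 1) = (h, 1)` and
`π_G ∘ ψ = π_G` if and only if there exists a group homomorphism
`r : G → Ker(β) ≤ H` such that `g ▷ h = r(g)·h·r(g ◁ h)⁻¹`. -/
theorem bicross_iso_rightSemidirect_fixing_H_and_G_iff {H G : Type*} [Group H] [Group G]
    {act : G → H → H} {coact : G → H → G}
    (h3 : ∀ (g₁ g₂ : G) (h : H), coact (g₁ * g₂) h = coact g₁ h * coact g₂ h)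
    (mp : IsMatchedPair act coact) :
    (∃ ψ : H × G → H × G,
        (∀ x y : H × G,
          ψ (bicrossMul act coact x y) =
            bicrossMul (fun (_ : G) (h : H) => h) coact (ψ x) (ψ y)) ∧
        Function.Bijective ψ ∧
        (∀ h : H, ψ (h, 1) = (h, 1)) ∧
        (∀ x : H × G, (ψ x).2 = x.2)) ↔
      ∃ r : G → H,
        (∀ g x : G, coact x (r g) = x) ∧
        (∀ g₁ g₂ : G, r (g₁ * g₂) = r g₁ * r g₂) ∧
        ∀ (g : G) (h : H), act g h = r g * h * (r (coact g h))⁻¹ :=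
  bicross_iso_rightSemidirect_fixing_H_and_G_iff_general mp
end

section
/- Let n and m be positive integers and C_n = ⟨a⟩, C_m = ⟨b⟩ cyclic groups of orders n and m. There is a one-to-one correspondence between the set of all matched pairs (C_n, C_m, α, β) and the set of all pairs (θ, φ) of bijections θ : ℤ_n → ℤ_n and φ : ℤ_m → ℤ_m satisfying: θ(0) = 0 and φ(0) = 0; the order of θ (as a permutation) divides m and the order of φ divides n; θ^y(x + z) − θ^y(z) = θ^{φ^z(y)}(x) for all x, z ∈ ℤ_n and y ∈ ℤ_m; and φ^y(x + z) − φ^y(z) = φ^{θ^z(y)}(x) for all x, z ∈ ℤ_m and y ∈ ℤ_n. The correspondence is given by α(bⁱ, aˣ) = a^{θⁱ(x)} and β(b^y, a^j) = b^{φ^j(y)}. -/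
/-!
For cyclic groups `C_m = ⟨b⟩` and `C_n = ⟨a⟩`, a left action of `C_m` is determined by the
permutation `θ` through which `b` moves the exponents of `a`, and a right action of `C_n` by the
permutation `φ` through which `a` moves the exponents of `b`; such a permutation comes from an
action exactly when its order divides the order of the acting group. Written in exponents, the two
compatibility laws of a matched pair become the two functional equations, and `θ 0 = 0`,
`φ 0 = 0` hold because in every matched pair the actions fix the identity.
-/

open Multiplicative

theorem pow_mod_of_orderOf_dvd {M : Type*} [Monoid M] {x : M} {k : ℕ} (hx : orderOf x ∣ k)
    (i : ℕ) : x ^ (i % k) = x ^ i := by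
  rw [← pow_mod_orderOf, Nat.mod_mod_of_dvd _ hx, pow_mod_orderOf]

theorem pow_val_add_of_orderOf_dvd {M : Type*} [Monoid M] {x : M} {k : ℕ} [NeZero k]
    (hx : orderOf x ∣ k) (u v : ZMod k) : x ^ (u + v).val = x ^ u.val * x ^ v.val := by
  rw [ZMod.val_add, pow_mod_of_orderOf_dvd hx, pow_add]

theorem pow_val_one_of_orderOf_dvd {M : Type*} [Monoid M] {x : M} {k : ℕ} (hx : orderOf x ∣ k) :
    x ^ (1 : ZMod k).val = x := by
  rw [ZMod.val_one_eq_one_mod, pow_mod_of_orderOf_dvd hx, pow_one]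

theorem ofAdd_one_pow_val {k : ℕ} [NeZero k] (y : ZMod k) :
    ofAdd (1 : ZMod k) ^ y.val = ofAdd y := by
  rw [← ofAdd_nsmul, nsmul_one, ZMod.natCast_zmod_val]

theorem ofAdd_one_pow_self (k : ℕ) : ofAdd (1 : ZMod k) ^ k = 1 := by
  rw [← ofAdd_nsmul, nsmul_one, ZMod.natCast_self, ofAdd_zero]

namespace IsMatchedPair

section Actions

variable {H G : Type*} [Group H] [Group G] {act : G → H → H} {coact : G → H → G}

def actHom (mp : IsMatchedPair act coact) : G →* Equiv.Perm H where
  toFun g :=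
    { toFun := act g
      invFun := act g⁻¹
      left_inv h := by rw [← mp.mul_act, inv_mul_cancel, mp.one_act]
      right_inv h := by rw [← mp.mul_act, mul_inv_cancel, mp.one_act] }
  map_one' := Equiv.ext mp.one_act
  map_mul' g₁ g₂ := Equiv.ext (mp.mul_act g₁ g₂)

def coactHom (mp : IsMatchedPair act coact) : Hᵐᵒᵖ →* Equiv.Perm G where
  toFun h :=
    { toFun g := coact g h.unop
      invFun g := coact g h.unop⁻¹
      left_inv g := by
        change coact (coact g h.unop) h.unop⁻¹ = g
        rw [← mp.coact_mul, mul_inv_cancel, mp.coact_one]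
      right_inv g := by
        change coact (coact g h.unop⁻¹) h.unop = g
        rw [← mp.coact_mul, inv_mul_cancel, mp.coact_one] }
  map_one' := Equiv.ext mp.coact_one
  map_mul' h₁ h₂ := Equiv.ext fun g => mp.coact_mul g h₂.unop h₁.unop

theorem act_pow (mp : IsMatchedPair act coact) (g : G) (i : ℕ) (h : H) :
    act (g ^ i) h = (mp.actHom g ^ i) h := by
  rw [← map_pow]
  rfl

theorem coact_pow (mp : IsMatchedPair act coact) (g : G) (h : H) (j : ℕ) :
    coact g (h ^ j) = (mp.coactHom (MulOpposite.op h) ^ j) g := by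
  rw [← map_pow, ← MulOpposite.op_pow]
  rfl

end Actions

section Cyclic

variable {n m : ℕ}
  {act : Multiplicative (ZMod m) → Multiplicative (ZMod n) → Multiplicative (ZMod n)}
  {coact : Multiplicative (ZMod m) → Multiplicative (ZMod n) → Multiplicative (ZMod m)}

/-- The paper's `θ`: the generator `b` of `C_m` acting on the exponents of `a`. -/
def theta (mp : IsMatchedPair act coact) : Equiv.Perm (ZMod n) :=
  toAdd.permCongrHom (mp.actHom (ofAdd 1))

/-- The paper's `φ`: the generator `a` of `C_n` acting on the exponents of `b`. -/
def phi (mp : IsMatchedPair act coact) : Equiv.Perm (ZMod m) :=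
  toAdd.permCongrHom (mp.coactHom (MulOpposite.op (ofAdd 1)))

theorem act_ofAdd_one_pow (mp : IsMatchedPair act coact) (i : ℕ) (x : ZMod n) :
    act (ofAdd (1 : ZMod m) ^ i) (ofAdd x) = ofAdd ((mp.theta ^ i) x) := by
  rw [theta, ← map_pow toAdd.permCongrHom, mp.act_pow]
  rfl

theorem coact_ofAdd_one_pow (mp : IsMatchedPair act coact) (j : ℕ) (y : ZMod m) :
    coact (ofAdd y) (ofAdd (1 : ZMod n) ^ j) = ofAdd ((mp.phi ^ j) y) := by
  rw [phi, ← map_pow toAdd.permCongrHom, mp.coact_pow]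
  rfl

theorem theta_zero (mp : IsMatchedPair act coact) : mp.theta 0 = 0 := by
  have h := mp.act_ofAdd_one_pow 1 0
  rw [pow_one, pow_one, ofAdd_zero, mp.act_one] at h
  exact ofAdd_eq_one.mp h.symm

theorem phi_zero (mp : IsMatchedPair act coact) : mp.phi 0 = 0 := by
  have h := mp.coact_ofAdd_one_pow 1 0
  rw [pow_one, pow_one, ofAdd_zero, mp.one_coact] at h
  exact ofAdd_eq_one.mp h.symm

theorem orderOf_theta_dvd (mp : IsMatchedPair act coact) : orderOf mp.theta ∣ m := by
  rw [theta, MulEquiv.orderOf_eq]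
  exact (orderOf_map_dvd _ _).trans (orderOf_dvd_of_pow_eq_one (ofAdd_one_pow_self m))

theorem orderOf_phi_dvd (mp : IsMatchedPair act coact) : orderOf mp.phi ∣ n := by
  rw [phi, MulEquiv.orderOf_eq]
  refine (orderOf_map_dvd _ _).trans (orderOf_dvd_of_pow_eq_one ?_)
  rw [← MulOpposite.op_pow, ofAdd_one_pow_self, MulOpposite.op_one]

theorem act_ofAdd [NeZero m] (mp : IsMatchedPair act coact) (y : ZMod m) (x : ZMod n) :
    act (ofAdd y) (ofAdd x) = ofAdd ((mp.theta ^ y.val) x) := by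
  rw [← ofAdd_one_pow_val y, mp.act_ofAdd_one_pow]

theorem coact_ofAdd [NeZero n] (mp : IsMatchedPair act coact) (y : ZMod m) (x : ZMod n) :
    coact (ofAdd y) (ofAdd x) = ofAdd ((mp.phi ^ x.val) y) := by
  rw [← ofAdd_one_pow_val x, mp.coact_ofAdd_one_pow]

theorem theta_pow_add_sub [NeZero n] [NeZero m] (mp : IsMatchedPair act coact)
    (x z : ZMod n) (y : ZMod m) :
    (mp.theta ^ y.val) (x + z) - (mp.theta ^ y.val) z =
      (mp.theta ^ ((mp.phi ^ z.val) y).val) x := by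
  have h := mp.act_mul (ofAdd y) (ofAdd z) (ofAdd x)
  rw [← ofAdd_add, mp.act_ofAdd, mp.act_ofAdd, mp.coact_ofAdd, mp.act_ofAdd, ← ofAdd_add,
    ofAdd.injective.eq_iff, add_comm z] at h
  rw [h, add_sub_cancel_left]

theorem phi_pow_add_sub [NeZero n] [NeZero m] (mp : IsMatchedPair act coact)
    (x z : ZMod m) (y : ZMod n) :
    (mp.phi ^ y.val) (x + z) - (mp.phi ^ y.val) z =
      (mp.phi ^ ((mp.theta ^ z.val) y).val) x := by
  have h := mp.mul_coact (ofAdd x) (ofAdd z) (ofAdd y)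
  rw [← ofAdd_add, mp.coact_ofAdd, mp.act_ofAdd, mp.coact_ofAdd, mp.coact_ofAdd, ← ofAdd_add,
    ofAdd.injective.eq_iff] at h
  rw [h, add_sub_cancel_right]

end Cyclic

end IsMatchedPair

section OfPerms

variable {n m : ℕ}

/-- `b^y ▷ a^x = a^(θ^y x)`. -/
def powAct (θ : Equiv.Perm (ZMod n)) (g : Multiplicative (ZMod m))
    (h : Multiplicative (ZMod n)) : Multiplicative (ZMod n) :=
  ofAdd ((θ ^ g.toAdd.val) h.toAdd)

/-- `b^y ◁ a^x = b^(φ^x y)`. -/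
def powCoact (φ : Equiv.Perm (ZMod m)) (g : Multiplicative (ZMod m))
    (h : Multiplicative (ZMod n)) : Multiplicative (ZMod m) :=
  ofAdd ((φ ^ h.toAdd.val) g.toAdd)

theorem isMatchedPair_powAct_powCoact [NeZero n] [NeZero m] {θ : Equiv.Perm (ZMod n)}
    {φ : Equiv.Perm (ZMod m)} (hθ : orderOf θ ∣ m) (hφ : orderOf φ ∣ n)
    (hθφ : ∀ (x z : ZMod n) (y : ZMod m),
      (θ ^ y.val) (x + z) - (θ ^ y.val) z = (θ ^ ((φ ^ z.val) y).val) x)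
    (hφθ : ∀ (x z : ZMod m) (y : ZMod n),
      (φ ^ y.val) (x + z) - (φ ^ y.val) z = (φ ^ ((θ ^ z.val) y).val) x) :
    IsMatchedPair (powAct (m := m) θ) (powCoact (n := n) φ) where
  one_act h := by
    simp only [powAct, toAdd_one, ZMod.val_zero, pow_zero, Equiv.Perm.one_apply, ofAdd_toAdd]
  mul_act g₁ g₂ h := by
    simp only [powAct, toAdd_mul, pow_val_add_of_orderOf_dvd hθ, Equiv.Perm.mul_apply, toAdd_ofAdd]
  coact_one g := by
    simp only [powCoact, toAdd_one, ZMod.val_zero, pow_zero, Equiv.Perm.one_apply, ofAdd_toAdd]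
  coact_mul g h₁ h₂ := by
    simp only [powCoact, toAdd_mul, add_comm h₁.toAdd, pow_val_add_of_orderOf_dvd hφ,
      Equiv.Perm.mul_apply, toAdd_ofAdd]
  act_mul g h₁ h₂ := by
    simp only [powAct, powCoact, toAdd_mul, toAdd_ofAdd, ← ofAdd_add]
    rw [add_comm h₁.toAdd, sub_eq_iff_eq_add.mp (hθφ h₂.toAdd h₁.toAdd g.toAdd), add_comm]
  mul_coact g₁ g₂ h := by
    simp only [powAct, powCoact, toAdd_mul, toAdd_ofAdd, ← ofAdd_add]
    rw [sub_eq_iff_eq_add.mp (hφθ g₁.toAdd g₂.toAdd h.toAdd)]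

variable {act : Multiplicative (ZMod m) → Multiplicative (ZMod n) → Multiplicative (ZMod n)}
  {coact : Multiplicative (ZMod m) → Multiplicative (ZMod n) → Multiplicative (ZMod m)}

theorem IsMatchedPair.theta_powAct {θ : Equiv.Perm (ZMod n)} (hθ : orderOf θ ∣ m)
    (mp : IsMatchedPair (powAct θ) coact) : mp.theta = θ := by
  ext x
  change (θ ^ (1 : ZMod m).val) x = θ x
  rw [pow_val_one_of_orderOf_dvd hθ]

theorem IsMatchedPair.phi_powCoact {φ : Equiv.Perm (ZMod m)} (hφ : orderOf φ ∣ n)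
    (mp : IsMatchedPair act (powCoact φ)) : mp.phi = φ := by
  ext y
  change (φ ^ (1 : ZMod n).val) y = φ y
  rw [pow_val_one_of_orderOf_dvd hφ]

theorem IsMatchedPair.powAct_theta [NeZero m] (mp : IsMatchedPair act coact) :
    powAct mp.theta = act :=
  funext₂ fun g h => (mp.act_ofAdd g.toAdd h.toAdd).symm

theorem IsMatchedPair.powCoact_phi [NeZero n] (mp : IsMatchedPair act coact) :
    powCoact mp.phi = coact :=
  funext₂ fun g h => (mp.coact_ofAdd g.toAdd h.toAdd).symm

end OfPerms

variable (n m) in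
def IsMatchedPermPair (θ : Equiv.Perm (ZMod n)) (φ : Equiv.Perm (ZMod m)) : Prop :=
  θ 0 = 0 ∧ φ 0 = 0 ∧ orderOf θ ∣ m ∧ orderOf φ ∣ n ∧
    (∀ (x z : ZMod n) (y : ZMod m),
      (θ ^ y.val) (x + z) - (θ ^ y.val) z = (θ ^ ((φ ^ z.val) y).val) x) ∧
    (∀ (x z : ZMod m) (y : ZMod n),
      (φ ^ y.val) (x + z) - (φ ^ y.val) z = (φ ^ ((θ ^ z.val) y).val) x)

def matchedPairEquivPermPair (n m : ℕ) [NeZero n] [NeZero m] :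
    {p : (Multiplicative (ZMod m) → Multiplicative (ZMod n) → Multiplicative (ZMod n)) ×
        (Multiplicative (ZMod m) → Multiplicative (ZMod n) → Multiplicative (ZMod m)) //
        IsMatchedPair p.1 p.2} ≃
      {q : Equiv.Perm (ZMod n) × Equiv.Perm (ZMod m) // IsMatchedPermPair n m q.1 q.2} where
  toFun p := ⟨(p.2.theta, p.2.phi), p.2.theta_zero, p.2.phi_zero, p.2.orderOf_theta_dvd,
    p.2.orderOf_phi_dvd, p.2.theta_pow_add_sub, p.2.phi_pow_add_sub⟩
  invFun q := ⟨(powAct q.1.1, powCoact q.1.2),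
    isMatchedPair_powAct_powCoact q.2.2.2.1 q.2.2.2.2.1 q.2.2.2.2.2.1 q.2.2.2.2.2.2⟩
  left_inv p := Subtype.ext <| Prod.ext p.2.powAct_theta p.2.powCoact_phi
  right_inv q := Subtype.ext <| Prod.ext (IsMatchedPair.theta_powAct q.2.2.2.1 _)
    (IsMatchedPair.phi_powCoact q.2.2.2.2.1 _)

/-- **Matched pairs of finite cyclic groups.** There is a one-to-one
correspondence between matched pairs `(C_n, C_m, α, β)` and pairs `(θ, φ)` of
bijections of `ℤ_n` resp. `ℤ_m` with `θ(0) = 0`, `φ(0) = 0`, `ord(θ) ∣ m`,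
`ord(φ) ∣ n`, `θ^y(x + z) - θ^y(z) = θ^(φ^z(y))(x)` and
`φ^y(x + z) - φ^y(z) = φ^(θ^z(y))(x)`; the correspondence is given by
`α(bⁱ, aˣ) = a^(θⁱ(x))` and `β(b^y, a^j) = b^(φ^j(y))`. -/
theorem matchedPairs_Cn_Cm_correspondence {n m : ℕ} (hn : 0 < n) (hm : 0 < m) :
    ∃ e : {p : (Multiplicative (ZMod m) → Multiplicative (ZMod n) → Multiplicative (ZMod n)) ×
            (Multiplicative (ZMod m) → Multiplicative (ZMod n) → Multiplicative (ZMod m)) //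
            IsMatchedPair p.1 p.2} ≃
          {q : Equiv.Perm (ZMod n) × Equiv.Perm (ZMod m) //
            q.1 0 = 0 ∧ q.2 0 = 0 ∧ orderOf q.1 ∣ m ∧ orderOf q.2 ∣ n ∧
            (∀ (x z : ZMod n) (y : ZMod m),
              (q.1 ^ y.val) (x + z) - (q.1 ^ y.val) z =
                (q.1 ^ ((q.2 ^ z.val) y).val) x) ∧
            (∀ (x z : ZMod m) (y : ZMod n),
              (q.2 ^ y.val) (x + z) - (q.2 ^ y.val) z =
                (q.2 ^ ((q.1 ^ z.val) y).val) x)},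
      ∀ p, (∀ (i : ℕ) (x : ZMod n),
          p.val.1 (Multiplicative.ofAdd (1 : ZMod m) ^ i) (Multiplicative.ofAdd x) =
            Multiplicative.ofAdd (((e p).val.1 ^ i) x)) ∧
        (∀ (j : ℕ) (y : ZMod m),
          p.val.2 (Multiplicative.ofAdd y) (Multiplicative.ofAdd (1 : ZMod n) ^ j) =
            Multiplicative.ofAdd (((e p).val.2 ^ j) y)) := by
  have : NeZero n := ⟨hn.ne'⟩
  have : NeZero m := ⟨hm.ne'⟩
  exact ⟨matchedPairEquivPermPair n m,
    fun p => ⟨p.2.act_ofAdd_one_pow, p.2.coact_ofAdd_one_pow⟩⟩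
end
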